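/- Let ω be holomorphic on the open unit disk D with |ω(z)| ≤ 1 for all z ∈ D, let c ∈ ℂ, and set A(z) = 1 + c·z − z·∫₀ᶻ ω(t) dt (segment integral). If z₀ ∈ D and A(z₀) = 0, then z₀ ≠ 0 and A'(z₀) ≠ 0; that is, every zero of A in D is simple. (Consequently, a pole in D of a meromorphic f with f(0) = 0, f'(0) = 1 satisfying |z/f(z) − z(z/f(z))' − 1| < 1 on D is necessarily a simple pole.) -/

import Mathlib

open Complex Metric

/-- Contour integral of `ω` along the straight line segment from `z₁` to `z₂`:
`∫_{z₁}^{z₂} ω(t) dt = (z₂ - z₁) ∫₀¹ ω(z₁ + s (z₂ - z₁)) ds`. -/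
noncomputable def segInt (ω : ℂ → ℂ) (z₁ z₂ : ℂ) : ℂ :=
  (z₂ - z₁) * ∫ s in (0:ℝ)..(1:ℝ), ω (z₁ + (s : ℂ) * (z₂ - z₁))

/-! The segment integral `F z = ∫₀ᶻ ω` is a primitive of `ω` on the disk: a holomorphic
function on a disk has some primitive `Φ` (Morera), and the fundamental theorem of calculus
along the segment gives `F z = Φ z - Φ 0`. Hence `A = 1 + c z - z F` satisfies
`A - z A' = 1 + z² ω`. At a zero `z₀` of `A` this reads `-z₀ A'(z₀) = 1 + z₀² ω(z₀)`, which
cannot vanish because `|z₀|² |ω(z₀)| < 1`; so both `z₀` and `A'(z₀)` are nonzero. -/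

theorem segInt_eq_sub_of_hasDerivAt {ω Φ : ℂ → ℂ} {z₁ z₂ : ℂ}
    (hΦ : ∀ w ∈ segment ℝ z₁ z₂, HasDerivAt Φ (ω w) w)
    (hω : ContinuousOn ω (segment ℝ z₁ z₂)) :
    segInt ω z₁ z₂ = Φ z₂ - Φ z₁ := by
  set γ : ℝ → ℂ := fun s => z₁ + s * (z₂ - z₁)
  have hγ_mem : Set.MapsTo γ (Set.uIcc 0 1) (segment ℝ z₁ z₂) := by
    intro s hs
    rw [Set.uIcc_of_le zero_le_one] at hs
    rw [segment_eq_image']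
    exact ⟨s, hs, by simp [γ, Complex.real_smul]⟩
  have hγ : ∀ s : ℝ, HasDerivAt γ (z₂ - z₁) s := fun s =>
    (((hasDerivAt_id s).ofReal_comp.mul_const (z₂ - z₁)).const_add z₁).congr_deriv (by simp)
  have hγ_cont : Continuous γ := by fun_prop
  have key := intervalIntegral.integral_eq_sub_of_hasDerivAt (a := 0) (b := 1) (f := Φ ∘ γ)
    (f' := fun s => (z₂ - z₁) * ω (γ s))
    (fun s hs => by simpa [mul_comm] using (hΦ _ (hγ_mem hs)).comp s (hγ s))
    ((continuousOn_const.mul (hω.comp hγ_cont.continuousOn hγ_mem)).intervalIntegrable)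
  simpa [segInt, γ, intervalIntegral.integral_const_mul] using key

theorem hasDerivAt_segInt_of_differentiableOn_ball {ω : ℂ → ℂ} {x z : ℂ} {R : ℝ}
    (hω : DifferentiableOn ℂ ω (ball x R)) (hz : z ∈ ball x R) :
    HasDerivAt (segInt ω x) (ω z) z := by
  obtain ⟨Φ, hΦ⟩ := hω.isExactOn_ball
  have hx : x ∈ ball x R := mem_ball_self (pos_of_mem_ball hz)
  have hsegInt : ∀ w ∈ ball x R, segInt ω x w = Φ w - Φ x := fun w hw =>
    have hseg := (convex_ball x R).segment_subset hx hw
    segInt_eq_sub_of_hasDerivAt (fun v hv => hΦ v (hseg hv)) (hω.continuousOn.mono hseg)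
  exact ((hΦ z hz).sub_const (Φ x)).congr_of_eventuallyEq
    (Filter.eventually_of_mem (isOpen_ball.mem_nhds hz) hsegInt)

theorem sub_mul_deriv_eq_one_add_sq_mul {𝕜 : Type*} [NontriviallyNormedField 𝕜]
    {A F : 𝕜 → 𝕜} {c w z : 𝕜} (hF : HasDerivAt F w z)
    (hA : A =ᶠ[nhds z] fun z => 1 + c * z - z * F z) :
    A z - z * deriv A z = 1 + z ^ 2 * w := by
  have hA' : HasDerivAt A (c * 1 - (1 * F z + z * w)) z :=
    ((((hasDerivAt_id' z).const_mul c).const_add 1).sub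
      ((hasDerivAt_id' z).mul hF)).congr_of_eventuallyEq hA
  rw [hA'.deriv, hA.eq_of_nhds]
  ring

theorem one_add_sq_mul_ne_zero_of_norm_lt_one {𝕜 : Type*} [NormedDivisionRing 𝕜] {z w : 𝕜}
    (hz : ‖z‖ < 1) (hw : ‖w‖ ≤ 1) : 1 + z ^ 2 * w ≠ 0 := by
  intro h
  have hnorm : ‖z‖ ^ 2 * ‖w‖ = 1 := by
    rw [← norm_pow, ← norm_mul, eq_neg_of_add_eq_zero_right h, norm_neg, norm_one]
  nlinarith [norm_nonneg z, norm_nonneg w]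

/-- Every zero in the unit disk of `A(z) = 1 + c z - z ∫₀ᶻ ω(t) dt` (with `ω`
holomorphic, `|ω| ≤ 1` on the disk) is a simple zero distinct from `0`: if
`A(z₀) = 0` then `z₀ ≠ 0` and `A'(z₀) ≠ 0`. (So a pole of the corresponding
meromorphic `f = z/A` is necessarily simple.) -/
theorem stmt_8 (ω : ℂ → ℂ) (c : ℂ)
    (hω : DifferentiableOn ℂ ω (ball (0 : ℂ) 1))
    (hbd : ∀ z ∈ ball (0 : ℂ) 1, ‖ω z‖ ≤ 1)
    (A : ℂ → ℂ)
    (hA : ∀ z ∈ ball (0 : ℂ) 1, A z = 1 + c * z - z * segInt ω 0 z)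
    (z₀ : ℂ) (hz₀ : z₀ ∈ ball (0 : ℂ) 1) (hzero : A z₀ = 0) :
    z₀ ≠ 0 ∧ deriv A z₀ ≠ 0 := by
  have hident : A z₀ - z₀ * deriv A z₀ = 1 + z₀ ^ 2 * ω z₀ :=
    sub_mul_deriv_eq_one_add_sq_mul (hasDerivAt_segInt_of_differentiableOn_ball hω hz₀)
      (Filter.eventually_of_mem (isOpen_ball.mem_nhds hz₀) hA)
  have hne : 1 + z₀ ^ 2 * ω z₀ ≠ 0 :=
    one_add_sq_mul_ne_zero_of_norm_lt_one (mem_ball_zero_iff.mp hz₀) (hbd z₀ hz₀)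
  rw [← hident, hzero, zero_sub, neg_ne_zero] at hne
  exact mul_ne_zero_iff.mp hne
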